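/- arXiv:1206.0228 — 2 statements merged into one kernel-verified Lean document; each statement's English description precedes it below -/
import Mathlib

section
/- Let $P$ be an even polynomial with complex coefficients and let $s > 0$. For $\mathrm{Re}(z)$ sufficiently large define $F(z) = \int_0^\infty t^{z-1} e^{-t s^2} \left( \int_{\mathbb{R}} e^{-t\lambda^2} P(i\lambda)\, d\lambda \right) dt$. Then $F$ extends meromorphically to $\mathbb{C}$, is regular at $z = 0$, and $F(0) = -2\pi \int_0^s P(r)\, dr$. -/
open Complex MeasureTheory Set Polynomial
open scoped Real

/-!
Because `P` is even, `P(iλ) = P(i|λ|)`, and expanding `P = ∑ aₖ Xᵏ` turns the inner Gaussian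
integral into `∑ₖ aₖ iᵏ Γ((k+1)/2) t^{-(k+1)/2}`. The Mellin transform of `t^{-a} e^{-ts²}` is
`(s²)^{a-z} Γ(z-a)`, so on a right half-plane `F` is a finite sum of shifted Gamma functions,
which is meromorphic on all of `ℂ`.
Odd `k` contribute nothing since `aₖ = 0`; for even `k` the point `z = 0` is not a pole, and the
reflection formula gives `iᵏ Γ((k+1)/2) Γ(-(k+1)/2) = -2π/(k+1)`, so the `k`-th term at `0` is
`-2π aₖ s^{k+1}/(k+1) = -2π ∫₀ˢ aₖ rᵏ dr`.
-/

theorem Polynomial.coeff_eq_zero_of_odd_of_eval_neg {K : Type*} [Field K] [CharZero K] {P : K[X]}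
    (hP : ∀ x, P.eval (-x) = P.eval x) {k : ℕ} (hk : Odd k) : P.coeff k = 0 := by
  have hcomp : P.comp (C (-1) * X) = P := Polynomial.funext fun x => by simp [hP]
  have hcoeff := congrArg (coeff · k) hcomp
  simp only [comp_C_mul_X_coeff, hk.neg_one_pow, mul_neg_one] at hcoeff
  exact CharZero.neg_eq_self_iff.mp hcoeff

theorem integrable_abs_pow_mul_exp_neg_mul_sq {b : ℝ} (hb : 0 < b) (k : ℕ) :
    Integrable fun x : ℝ => |x| ^ k * rexp (-b * x ^ 2) := by
  refine (integrable_rpow_mul_exp_neg_mul_sq hb (s := k)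
    (by linarith [k.cast_nonneg (α := ℝ)])).abs.congr ?_
  filter_upwards with x
  simp [abs_mul, Real.rpow_natCast, abs_pow]

theorem integral_abs_pow_mul_exp_neg_mul_sq {b : ℝ} (hb : 0 < b) (k : ℕ) :
    ∫ x : ℝ, |x| ^ k * rexp (-b * x ^ 2) =
      Real.Gamma ((k + 1) / 2) * b ^ (-((k : ℝ) + 1) / 2) := by
  have hhalf := integral_rpow_mul_exp_neg_mul_rpow two_pos (q := k)
    (by linarith [k.cast_nonneg (α := ℝ)]) hb
  simp only [Real.rpow_natCast, Real.rpow_two] at hhalf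
  have hsym := integral_comp_abs (f := fun x => x ^ k * rexp (-b * x ^ 2))
  simp only [sq_abs] at hsym
  rw [hsym, hhalf]
  ring

theorem integral_cexp_neg_mul_sq_mul_eval_I_mul {P : ℂ[X]} (hP : ∀ x, P.eval (-x) = P.eval x)
    {t : ℝ} (ht : 0 < t) :
    ∫ x : ℝ, cexp (-t * x ^ 2) * P.eval (I * x) =
      ∑ k ∈ Finset.range (P.natDegree + 1),
        P.coeff k * I ^ k * Gamma ((k + 1) / 2) * (t : ℂ) ^ (-((k + 1) / 2 : ℂ)) := by
  have hpt : ∀ x : ℝ, cexp (-t * x ^ 2) * P.eval (I * x) = ∑ k ∈ Finset.range (P.natDegree + 1),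
      P.coeff k * I ^ k * ((|x| ^ k * rexp (-t * x ^ 2) : ℝ) : ℂ) := by
    intro x
    have habs : P.eval (I * x) = P.eval (I * |x|) := by
      rcases abs_choice x with h | h <;> simp [h, hP]
    rw [habs, eval_eq_sum_range, Finset.mul_sum]
    refine Finset.sum_congr rfl fun k _ => ?_
    push_cast
    ring
  simp_rw [hpt]
  rw [integral_finsetSum _ fun k _ =>
    ((integrable_abs_pow_mul_exp_neg_mul_sq ht k).ofReal).const_mul _]
  refine Finset.sum_congr rfl fun k _ => ?_
  rw [integral_const_mul, integral_complex_ofReal, integral_abs_pow_mul_exp_neg_mul_sq ht,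
    ofReal_mul, ofReal_cpow ht.le, ← Gamma_ofReal]
  push_cast
  ring_nf

theorem integrableOn_cpow_mul_exp_neg_mul_Ioi {a : ℂ} {r : ℝ} (ha : 0 < a.re) (hr : 0 < r) :
    IntegrableOn (fun t : ℝ => (t : ℂ) ^ (a - 1) * cexp (-(r * t))) (Ioi 0) := by
  have hscaled := (integrableOn_Ioi_comp_mul_left_iff _ 0 hr).mpr
    (by simpa using Complex.GammaIntegral_convergent ha)
  refine IntegrableOn.congr_fun (hscaled.const_mul ((r : ℂ) ^ (1 - a))) (fun t ht => ?_)
    measurableSet_Ioi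
  have hr' : (r : ℂ) ≠ 0 := ofReal_ne_zero.mpr hr.ne'
  have hcancel : (r : ℂ) ^ (1 - a) * (r : ℂ) ^ (a - 1) = 1 := by
    rw [← cpow_add _ _ hr', sub_add_sub_cancel', sub_self, cpow_zero]
  rw [ofReal_mul, mul_cpow_ofReal_nonneg hr.le (le_of_lt ht)]
  linear_combination (↑t ^ (a - 1) * cexp (-(↑r * ↑t))) * hcancel

theorem integral_cpow_mul_cexp_mul_sum_cpow {ι : Type*} (S : Finset ι) (c a : ι → ℂ) {r : ℝ}
    (hr : 0 < r) {z : ℂ} (hz : ∀ i ∈ S, (a i).re < z.re) :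
    ∫ t in Ioi (0 : ℝ), (t : ℂ) ^ (z - 1) * cexp (-t * r) * ∑ i ∈ S, c i * (t : ℂ) ^ (-a i) =
      ∑ i ∈ S, c i * ((1 / r) ^ (z - a i) * Gamma (z - a i)) := by
  have hre : ∀ i ∈ S, 0 < (z - a i).re := fun i hi => by simpa using hz i hi
  have hpt : ∀ t ∈ Ioi (0 : ℝ),
      (t : ℂ) ^ (z - 1) * cexp (-t * r) * ∑ i ∈ S, c i * (t : ℂ) ^ (-a i) =
        ∑ i ∈ S, c i * ((t : ℂ) ^ (z - a i - 1) * cexp (-(r * t))) := by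
    intro t ht
    have ht' : (t : ℂ) ≠ 0 := ofReal_ne_zero.mpr (ne_of_gt ht)
    rw [Finset.mul_sum]
    refine Finset.sum_congr rfl fun i _ => ?_
    rw [show z - a i - 1 = (z - 1) + -a i by ring, cpow_add _ _ ht', mul_comm (r : ℂ), neg_mul]
    ring
  rw [setIntegral_congr_fun measurableSet_Ioi hpt, integral_finsetSum _ fun i hi =>
    (integrableOn_cpow_mul_exp_neg_mul_Ioi (hre i hi) hr).const_mul _]
  refine Finset.sum_congr rfl fun i hi => ?_
  rw [integral_const_mul, integral_cpow_mul_exp_neg_mul_Ioi (hre i hi) hr]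

theorem Complex.analyticAt_Gamma {s : ℂ} (hs : ∀ m : ℕ, s ≠ -m) : AnalyticAt ℂ Gamma s := by
  have hinv := (differentiable_one_div_Gamma.analyticAt s).inv (inv_ne_zero (Gamma_ne_zero hs))
  rwa [show (fun s => (Gamma s)⁻¹)⁻¹ = Gamma by ext; simp] at hinv

theorem Complex.Gamma_mul_Gamma_neg {z : ℂ} (hz : z ≠ 0) :
    Gamma z * Gamma (-z) = -π / (z * sin (π * z)) := by
  have hrefl := Gamma_mul_Gamma_one_sub z
  rw [sub_eq_neg_add, Gamma_add_one _ (neg_ne_zero.mpr hz)] at hrefl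
  calc Gamma z * Gamma (-z) = Gamma z * (-z * Gamma (-z)) / -z := by field_simp
    _ = -π / (z * sin (π * z)) := by rw [hrefl]; ring

theorem Complex.I_pow_mul_Gamma_mul_Gamma_neg_of_even {k : ℕ} (hk : Even k) :
    I ^ k * (Gamma ((k + 1) / 2) * Gamma (-((k + 1) / 2))) = -2 * π / (k + 1) := by
  obtain ⟨j, rfl⟩ := hk
  have hk1 : ((j + j : ℕ) : ℂ) + 1 ≠ 0 := by exact_mod_cast (j + j).succ_ne_zero
  have hsin : sin (π * ((((j + j : ℕ) : ℂ) + 1) / 2)) = (-1) ^ j := by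
    rw [show π * ((((j + j : ℕ) : ℂ) + 1) / 2) = (j * π : ℝ) + π / 2 by push_cast; ring,
      sin_add_pi_div_two, ← ofReal_cos, Real.cos_nat_mul_pi]
    push_cast; rfl
  rw [Gamma_mul_Gamma_neg (div_ne_zero hk1 two_ne_zero), hsin, ← two_mul, pow_mul, I_sq]
  field_simp

theorem analyticAt_const_cpow_sub {b : ℂ} (hb : b ∈ slitPlane) (a x : ℂ) :
    AnalyticAt ℂ (fun z => b ^ (z - a)) x := by
  fun_prop (disch := assumption)

theorem one_div_ofReal_sq_mem_slitPlane {s : ℝ} (hs : s ≠ 0) :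
    1 / ((s ^ 2 : ℝ) : ℂ) ∈ slitPlane := by
  rw [← ofReal_one, ← ofReal_div]
  exact ofReal_mem_slitPlane.mpr (by positivity)

theorem one_div_sq_cpow_neg_half {s : ℝ} (hs : 0 < s) (k : ℕ) :
    (1 / ((s ^ 2 : ℝ) : ℂ)) ^ (-(((k : ℂ) + 1) / 2)) = (s : ℂ) ^ (k + 1) := by
  have hreal : (1 / s ^ 2) ^ (-(((k : ℝ) + 1) / 2)) = s ^ (k + 1) := by
    rw [one_div, Real.inv_rpow (by positivity), Real.rpow_neg (by positivity), inv_inv,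
      ← Real.rpow_natCast s 2, ← Real.rpow_mul hs.le, ← Real.rpow_natCast]
    push_cast; ring_nf
  rw [show (1 / ((s ^ 2 : ℝ) : ℂ)) = ((1 / s ^ 2 : ℝ) : ℂ) by push_cast; ring,
    show -(((k : ℂ) + 1) / 2) = ((-(((k : ℝ) + 1) / 2) : ℝ) : ℂ) by push_cast; ring,
    ← ofReal_cpow (by positivity), hreal]
  push_cast; rfl

theorem Polynomial.intervalIntegral_eval_ofReal (P : ℂ[X]) (b : ℝ) :
    ∫ r in (0 : ℝ)..b, P.eval (r : ℂ) =
      ∑ k ∈ Finset.range (P.natDegree + 1), P.coeff k * (b : ℂ) ^ (k + 1) / (k + 1) := by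
  simp_rw [eval_eq_sum_range]
  rw [intervalIntegral.integral_finsetSum fun k _ =>
    (by fun_prop : Continuous fun r : ℝ => P.coeff k * (r : ℂ) ^ k).intervalIntegrable _ _]
  refine Finset.sum_congr rfl fun k _ => ?_
  rw [intervalIntegral.integral_const_mul]
  simp_rw [← ofReal_pow]
  rw [intervalIntegral.integral_ofReal, integral_pow]
  push_cast
  ring

noncomputable def mellinContinuation (P : ℂ[X]) (s : ℝ) (z : ℂ) : ℂ :=
  ∑ k ∈ Finset.range (P.natDegree + 1), P.coeff k * I ^ k * Gamma ((k + 1) / 2) *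
    ((1 / ((s ^ 2 : ℝ) : ℂ)) ^ (z - (k + 1) / 2) * Gamma (z - (k + 1) / 2))

theorem integral_eq_mellinContinuation {P : ℂ[X]} (hP : ∀ x, P.eval (-x) = P.eval x)
    {s : ℝ} (hs : s ≠ 0) {z : ℂ} (hz : ((P.natDegree : ℝ) + 1) / 2 < z.re) :
    ∫ t in Ioi (0 : ℝ), (t : ℂ) ^ (z - 1) * cexp (-t * (s : ℂ) ^ 2) *
        ∫ x : ℝ, cexp (-t * x ^ 2) * P.eval (I * x) = mellinContinuation P s z := by
  rw [← ofReal_pow, setIntegral_congr_fun measurableSet_Ioi fun t ht => by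
    rw [integral_cexp_neg_mul_sq_mul_eval_I_mul hP ht]]
  refine integral_cpow_mul_cexp_mul_sum_cpow _ _ _ (by positivity) fun k hk => ?_
  have hkn : (k : ℝ) ≤ P.natDegree := by exact_mod_cast Finset.mem_range_succ_iff.mp hk
  rw [show ((k : ℂ) + 1) / 2 = (((k : ℝ) + 1) / 2 : ℝ) by push_cast; ring, ofReal_re]
  linarith

theorem meromorphic_mellinContinuation (P : ℂ[X]) {s : ℝ} (hs : s ≠ 0) :
    Meromorphic (mellinContinuation P s) := fun x => by
  refine MeromorphicAt.fun_sum fun k _ => (MeromorphicAt.const _ x).mul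
    ((analyticAt_const_cpow_sub (one_div_ofReal_sq_mem_slitPlane hs) _ x).meromorphicAt.mul ?_)
  exact (Meromorphic.Gamma _).comp_analyticAt (g := fun z => z - _) (by fun_prop)

theorem analyticAt_mellinContinuation_zero {P : ℂ[X]} (hodd : ∀ k, Odd k → P.coeff k = 0)
    {s : ℝ} (hs : s ≠ 0) : AnalyticAt ℂ (mellinContinuation P s) 0 := by
  refine Finset.analyticAt_fun_sum _ fun k _ => ?_
  rcases Nat.even_or_odd k with ⟨j, rfl⟩ | hk
  · have hpole : ∀ m : ℕ, (0 : ℂ) - ((j + j : ℕ) + 1) / 2 ≠ -m := fun m hm => by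
      have hcast : ((j + j + 1 : ℕ) : ℂ) = (2 * m : ℕ) := by
        push_cast at hm ⊢; linear_combination -2 * hm
      have hparity : j + j + 1 = 2 * m := by exact_mod_cast hcast
      omega
    have hGamma : AnalyticAt ℂ (fun z => Gamma (z - (((j + j : ℕ) : ℂ) + 1) / 2)) 0 :=
      (analyticAt_Gamma hpole).comp (f := fun z => z - _) (by fun_prop)
    exact analyticAt_const.mul
      ((analyticAt_const_cpow_sub (one_div_ofReal_sq_mem_slitPlane hs) _ 0).mul hGamma)
  · simp only [hodd k hk, zero_mul]
    exact analyticAt_const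

theorem mellinContinuation_zero {P : ℂ[X]} (hodd : ∀ k, Odd k → P.coeff k = 0)
    {s : ℝ} (hs : 0 < s) :
    mellinContinuation P s 0 = -2 * π * ∫ r in (0 : ℝ)..s, P.eval (r : ℂ) := by
  rw [P.intervalIntegral_eval_ofReal, Finset.mul_sum]
  refine Finset.sum_congr rfl fun k _ => ?_
  rcases Nat.even_or_odd k with hk | hk
  · rw [zero_sub, one_div_sq_cpow_neg_half hs]
    linear_combination (P.coeff k * (s : ℂ) ^ (k + 1)) * I_pow_mul_Gamma_mul_Gamma_neg_of_even hk
  · simp [hodd k hk]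

theorem stmt2 (P : Polynomial ℂ) (hP : ∀ x : ℂ, P.eval (-x) = P.eval x)
    (s : ℝ) (hs : 0 < s)
    (F : ℂ → ℂ)
    (hF : ∀ z : ℂ, F z = ∫ t in Set.Ioi (0 : ℝ), (t : ℂ) ^ (z - 1) *
        Complex.exp (-(t : ℂ) * (s : ℂ) ^ 2) *
        ∫ lam : ℝ, Complex.exp (-(t : ℂ) * (lam : ℂ) ^ 2) * P.eval (Complex.I * lam)) :
    ∃ G : ℂ → ℂ, (∀ z : ℂ, MeromorphicAt G z) ∧ AnalyticAt ℂ G 0 ∧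
      (∃ N : ℝ, ∀ z : ℂ, N < z.re → G z = F z) ∧
      G 0 = -2 * (π : ℂ) * ∫ r in (0 : ℝ)..s, P.eval (r : ℂ) := by
  have hodd : ∀ k, Odd k → P.coeff k = 0 := fun k hk => P.coeff_eq_zero_of_odd_of_eval_neg hP hk
  refine ⟨mellinContinuation P s, meromorphic_mellinContinuation P hs.ne',
    analyticAt_mellinContinuation_zero hodd hs.ne', ⟨((P.natDegree : ℝ) + 1) / 2, fun z hz => ?_⟩,
    mellinContinuation_zero hodd hs⟩
  rw [hF z, integral_eq_mellinContinuation hP hs.ne' hz]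
end

section
/- Let $k \geq 1$ be an integer, let $z \in \mathbb{C}$ with $|z| = 1$, let $x \in \mathbb{R}$ with $0 < x < 1$, and let $y \in \mathbb{C}$ with $|y| < x$. Then the following identity of absolutely convergent infinite products holds: $\prod_{p,q \geq 0} (1 - z^{k+p-q} y x^{p+q+1})(1 - z^{-k+p-q} y x^{p+q+1}) \cdot \prod_{p,q \geq 0} (1 - z^{k+p-q} y x^{p+q-1})(1 - z^{-k+p-q} y x^{p+q-1}) = (1 - z^{k} y x^{-1})(1 - z^{-k} y x^{-1}) \cdot \prod_{p,q \geq 0} (1 - z^{k+1+p-q} y x^{p+q})(1 - z^{-k-1+p-q} y x^{p+q})(1 - z^{k-1+p-q} y x^{p+q})(1 - z^{-k+1+p-q} y x^{p+q})$. -/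
/-!
The factor `1 - z ^ (a + p - q) * y * x ^ (p + q + b)` depends only on `(a + p - q, p + q + b)`.
Hence, writing `T a b` for the product over all `(p, q)`, the factors of `T a 1` are those of
`T (a + 1) 0` with `q ≥ 1`, while those of `T a (-1)` are the factor at `(0, 0)`, the factors of
`T (a + 1) 0` with `q = 0` and all factors of `T (a - 1) 0`. So
`T a 1 * T a (-1) = (1 - z ^ a * y * x⁻¹) * T (a + 1) 0 * T (a - 1) 0` for every integer `a`, and
the theorem is this identity at `a = k` times the one at `a = -k`.
-/

open Complex Function Set

section Split

variable {M : Type*} [CommMonoid M] [TopologicalSpace M] [ContinuousMul M] [T2Space M]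

theorem tprod_prod_nat_eq_tprod_snd_zero_mul (f : ℕ × ℕ → M)
    (h₀ : Multipliable fun p => f (p, 0))
    (h₁ : Multipliable fun pq : ℕ × ℕ => f (pq.1, pq.2 + 1)) :
    ∏' pq, f pq = (∏' p, f (p, 0)) * ∏' pq : ℕ × ℕ, f (pq.1, pq.2 + 1) := by
  have hi : Injective fun p : ℕ => (p, 0) := fun _ _ h => (Prod.mk.inj h).1
  have hj : Injective (Prod.map id (· + 1) : ℕ × ℕ → ℕ × ℕ) :=
    injective_id.prodMap (add_left_injective 1)
  have hcompl : IsCompl (range fun p : ℕ => (p, 0)) (range (Prod.map id (· + 1))) := by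
    refine IsCompl.of_eq ?_ ?_ <;> ext ⟨p, q⟩ <;> cases q <;> simp
  exact ((hi.hasProd_range_iff.2 h₀.hasProd).mul_isCompl hcompl
    (hj.hasProd_range_iff.2 h₁.hasProd)).tprod_eq

end Split

theorem multipliable_one_sub_of_summable_norm {ι R : Type*} [NormedCommRing R] [NormOneClass R]
    [CompleteSpace R] {w : ι → R} (hw : Summable fun i => ‖w i‖) :
    Multipliable fun i => 1 - w i := by
  simpa [sub_eq_add_neg] using
    multipliable_one_add_of_summable (f := fun i => -w i) (by simpa using hw)

-- Irreducible, so that `rw` does not unfold it (and the integer exponents) when matching products.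
@[irreducible] noncomputable def eulerFactor (z y : ℂ) (x : ℝ) (a b : ℤ) (pq : ℕ × ℕ) : ℂ :=
  1 - z ^ (a + pq.1 - pq.2) * y * (x : ℂ) ^ ((pq.1 : ℤ) + pq.2 + b)

namespace eulerFactor

variable {z y : ℂ} {x : ℝ}

theorem zero_zero (a b : ℤ) : eulerFactor z y x a b (0, 0) = 1 - z ^ a * y * (x : ℂ) ^ b := by
  simp [eulerFactor]

theorem multipliable_comp_injective (hz : ‖z‖ = 1) (hx₀ : 0 < x) (hx₁ : x < 1) (a b : ℤ)
    {ι : Type*} {e : ι → ℕ × ℕ} (he : Injective e) :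
    Multipliable fun i => eulerFactor z y x a b (e i) := by
  have hgeom : Summable fun n : ℕ => x ^ n := summable_geometric_of_lt_one hx₀.le hx₁
  have hsum : Summable fun pq : ℕ × ℕ => ‖y‖ * x ^ b * (x ^ pq.1 * x ^ pq.2) :=
    (hgeom.mul_of_nonneg hgeom (fun n => by positivity) (fun n => by positivity)).mul_left _
  simp only [eulerFactor]
  refine multipliable_one_sub_of_summable_norm ((hsum.comp_injective he).congr fun i => ?_)
  simp [norm_zpow, hz, Complex.norm_real, abs_of_pos hx₀, zpow_add₀ hx₀.ne']
  ring

theorem multipliable (hz : ‖z‖ = 1) (hx₀ : 0 < x) (hx₁ : x < 1) (a b : ℤ) :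
    Multipliable (eulerFactor z y x a b) :=
  multipliable_comp_injective hz hx₀ hx₁ a b injective_id

theorem tprod_eq_tprod_snd_zero_mul (hz : ‖z‖ = 1) (hx₀ : 0 < x) (hx₁ : x < 1) (a b : ℤ) :
    ∏' pq, eulerFactor z y x a b pq =
      (∏' p, eulerFactor z y x a b (p, 0)) *
        ∏' pq : ℕ × ℕ, eulerFactor z y x a b (pq.1, pq.2 + 1) :=
  tprod_prod_nat_eq_tprod_snd_zero_mul _
    (multipliable_comp_injective hz hx₀ hx₁ a b fun _ _ h => (Prod.mk.inj h).1)
    (multipliable_comp_injective hz hx₀ hx₁ a b (e := fun pq : ℕ × ℕ => (pq.1, pq.2 + 1))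
      fun _ _ h => by simpa [Prod.ext_iff] using h)

theorem tprod_one_mul_tprod_neg_one (hz : ‖z‖ = 1) (hx₀ : 0 < x) (hx₁ : x < 1) (a : ℤ) :
    (∏' pq, eulerFactor z y x a 1 pq) * ∏' pq, eulerFactor z y x a (-1) pq =
      eulerFactor z y x a (-1) (0, 0) * (∏' pq, eulerFactor z y x (a + 1) 0 pq) *
        ∏' pq, eulerFactor z y x (a - 1) 0 pq := by
  have up (pq : ℕ × ℕ) :
      eulerFactor z y x a 1 pq = eulerFactor z y x (a + 1) 0 (pq.1, pq.2 + 1) := by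
    simp only [eulerFactor]; push_cast; ring_nf
  have row (p : ℕ) : eulerFactor z y x a (-1) (p + 1, 0) = eulerFactor z y x (a + 1) 0 (p, 0) := by
    simp only [eulerFactor]; push_cast; ring_nf
  have down (pq : ℕ × ℕ) :
      eulerFactor z y x a (-1) (pq.1, pq.2 + 1) = eulerFactor z y x (a - 1) 0 pq := by
    simp only [eulerFactor]; push_cast; ring_nf
  have hrow : Multipliable fun p : ℕ => eulerFactor z y x a (-1) (p + 1, 0) := by
    simpa only [row] using multipliable_comp_injective (y := y) hz hx₀ hx₁ (a + 1) 0
      (e := fun p => (p, 0)) fun _ _ h => (Prod.mk.inj h).1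
  rw [tprod_congr up, tprod_eq_tprod_snd_zero_mul hz hx₀ hx₁ a (-1), tprod_eq_zero_mul' hrow,
    tprod_congr row, tprod_congr down, tprod_eq_tprod_snd_zero_mul hz hx₀ hx₁ (a + 1) 0]
  ring

theorem tprod_sym_mul_tprod_sym (hz : ‖z‖ = 1) (hx₀ : 0 < x) (hx₁ : x < 1) (k : ℤ) :
    (∏' pq, eulerFactor z y x k 1 pq * eulerFactor z y x (-k) 1 pq) *
      (∏' pq, eulerFactor z y x k (-1) pq * eulerFactor z y x (-k) (-1) pq) =
    (1 - z ^ k * y * (x : ℂ) ^ (-1 : ℤ)) * (1 - z ^ (-k) * y * (x : ℂ) ^ (-1 : ℤ)) *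
      ∏' pq, eulerFactor z y x (k + 1) 0 pq * eulerFactor z y x (-k - 1) 0 pq *
        eulerFactor z y x (k - 1) 0 pq * eulerFactor z y x (-k + 1) 0 pq := by
  have hF := multipliable (y := y) hz hx₀ hx₁
  rw [(hF k 1).tprod_mul (hF (-k) 1), (hF k (-1)).tprod_mul (hF (-k) (-1)),
    (((hF _ _).mul (hF _ _)).mul (hF _ _)).tprod_mul (hF _ _),
    ((hF _ _).mul (hF _ _)).tprod_mul (hF _ _), (hF _ _).tprod_mul (hF _ _),
    mul_mul_mul_comm, tprod_one_mul_tprod_neg_one hz hx₀ hx₁ k,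
    tprod_one_mul_tprod_neg_one hz hx₀ hx₁ (-k), zero_zero, zero_zero]
  ring

end eulerFactor

theorem stmt9_general (k : ℤ) (z : ℂ) (hz : ‖z‖ = 1)
    (x : ℝ) (hx0 : 0 < x) (hx1 : x < 1) (y : ℂ) :
    (Multipliable fun pq : ℕ × ℕ =>
        (1 - z ^ (k + pq.1 - pq.2) * y * (x : ℂ) ^ ((pq.1 : ℤ) + pq.2 + 1)) *
        (1 - z ^ (-k + pq.1 - pq.2) * y * (x : ℂ) ^ ((pq.1 : ℤ) + pq.2 + 1))) ∧
    (Multipliable fun pq : ℕ × ℕ =>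
        (1 - z ^ (k + pq.1 - pq.2) * y * (x : ℂ) ^ ((pq.1 : ℤ) + pq.2 - 1)) *
        (1 - z ^ (-k + pq.1 - pq.2) * y * (x : ℂ) ^ ((pq.1 : ℤ) + pq.2 - 1))) ∧
    (Multipliable fun pq : ℕ × ℕ =>
        (1 - z ^ (k + 1 + pq.1 - pq.2) * y * (x : ℂ) ^ ((pq.1 : ℤ) + pq.2)) *
        (1 - z ^ (-k - 1 + pq.1 - pq.2) * y * (x : ℂ) ^ ((pq.1 : ℤ) + pq.2)) *
        (1 - z ^ (k - 1 + pq.1 - pq.2) * y * (x : ℂ) ^ ((pq.1 : ℤ) + pq.2)) *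
        (1 - z ^ (-k + 1 + pq.1 - pq.2) * y * (x : ℂ) ^ ((pq.1 : ℤ) + pq.2))) ∧
    (∏' pq : ℕ × ℕ,
        (1 - z ^ (k + pq.1 - pq.2) * y * (x : ℂ) ^ ((pq.1 : ℤ) + pq.2 + 1)) *
        (1 - z ^ (-k + pq.1 - pq.2) * y * (x : ℂ) ^ ((pq.1 : ℤ) + pq.2 + 1))) *
      (∏' pq : ℕ × ℕ,
        (1 - z ^ (k + pq.1 - pq.2) * y * (x : ℂ) ^ ((pq.1 : ℤ) + pq.2 - 1)) *
        (1 - z ^ (-k + pq.1 - pq.2) * y * (x : ℂ) ^ ((pq.1 : ℤ) + pq.2 - 1))) =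
      (1 - z ^ k * y * (x : ℂ) ^ (-1 : ℤ)) * (1 - z ^ (-k) * y * (x : ℂ) ^ (-1 : ℤ)) *
      ∏' pq : ℕ × ℕ,
        (1 - z ^ (k + 1 + pq.1 - pq.2) * y * (x : ℂ) ^ ((pq.1 : ℤ) + pq.2)) *
        (1 - z ^ (-k - 1 + pq.1 - pq.2) * y * (x : ℂ) ^ ((pq.1 : ℤ) + pq.2)) *
        (1 - z ^ (k - 1 + pq.1 - pq.2) * y * (x : ℂ) ^ ((pq.1 : ℤ) + pq.2)) *
        (1 - z ^ (-k + 1 + pq.1 - pq.2) * y * (x : ℂ) ^ ((pq.1 : ℤ) + pq.2)) := by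
  have hF := eulerFactor.multipliable (y := y) hz hx0 hx1
  have h : _ ∧ _ ∧ _ ∧ _ :=
    ⟨(hF k 1).mul (hF (-k) 1), (hF k (-1)).mul (hF (-k) (-1)),
      (((hF (k + 1) 0).mul (hF (-k - 1) 0)).mul (hF (k - 1) 0)).mul (hF (-k + 1) 0),
      eulerFactor.tprod_sym_mul_tprod_sym (y := y) hz hx0 hx1 k⟩
  simpa only [eulerFactor, add_zero, ← sub_eq_add_neg] using h

theorem stmt9 (k : ℤ) (hk : 1 ≤ k) (z : ℂ) (hz : ‖z‖ = 1)
    (x : ℝ) (hx0 : 0 < x) (hx1 : x < 1) (y : ℂ) (hy : ‖y‖ < x) :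
    (Multipliable fun pq : ℕ × ℕ =>
        (1 - z ^ (k + pq.1 - pq.2) * y * (x : ℂ) ^ ((pq.1 : ℤ) + pq.2 + 1)) *
        (1 - z ^ (-k + pq.1 - pq.2) * y * (x : ℂ) ^ ((pq.1 : ℤ) + pq.2 + 1))) ∧
    (Multipliable fun pq : ℕ × ℕ =>
        (1 - z ^ (k + pq.1 - pq.2) * y * (x : ℂ) ^ ((pq.1 : ℤ) + pq.2 - 1)) *
        (1 - z ^ (-k + pq.1 - pq.2) * y * (x : ℂ) ^ ((pq.1 : ℤ) + pq.2 - 1))) ∧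
    (Multipliable fun pq : ℕ × ℕ =>
        (1 - z ^ (k + 1 + pq.1 - pq.2) * y * (x : ℂ) ^ ((pq.1 : ℤ) + pq.2)) *
        (1 - z ^ (-k - 1 + pq.1 - pq.2) * y * (x : ℂ) ^ ((pq.1 : ℤ) + pq.2)) *
        (1 - z ^ (k - 1 + pq.1 - pq.2) * y * (x : ℂ) ^ ((pq.1 : ℤ) + pq.2)) *
        (1 - z ^ (-k + 1 + pq.1 - pq.2) * y * (x : ℂ) ^ ((pq.1 : ℤ) + pq.2))) ∧
    (∏' pq : ℕ × ℕ,
        (1 - z ^ (k + pq.1 - pq.2) * y * (x : ℂ) ^ ((pq.1 : ℤ) + pq.2 + 1)) *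
        (1 - z ^ (-k + pq.1 - pq.2) * y * (x : ℂ) ^ ((pq.1 : ℤ) + pq.2 + 1))) *
      (∏' pq : ℕ × ℕ,
        (1 - z ^ (k + pq.1 - pq.2) * y * (x : ℂ) ^ ((pq.1 : ℤ) + pq.2 - 1)) *
        (1 - z ^ (-k + pq.1 - pq.2) * y * (x : ℂ) ^ ((pq.1 : ℤ) + pq.2 - 1))) =
      (1 - z ^ k * y * (x : ℂ) ^ (-1 : ℤ)) * (1 - z ^ (-k) * y * (x : ℂ) ^ (-1 : ℤ)) *
      ∏' pq : ℕ × ℕ,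
        (1 - z ^ (k + 1 + pq.1 - pq.2) * y * (x : ℂ) ^ ((pq.1 : ℤ) + pq.2)) *
        (1 - z ^ (-k - 1 + pq.1 - pq.2) * y * (x : ℂ) ^ ((pq.1 : ℤ) + pq.2)) *
        (1 - z ^ (k - 1 + pq.1 - pq.2) * y * (x : ℂ) ^ ((pq.1 : ℤ) + pq.2)) *
        (1 - z ^ (-k + 1 + pq.1 - pq.2) * y * (x : ℂ) ^ ((pq.1 : ℤ) + pq.2)) :=
  stmt9_general k z hz x hx0 hx1 y
end
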